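/- The identity (y_{10} y_{110}⁻¹) · (x_∅⁻¹ y_{10} y_{110}⁻¹ x_∅) = y_{10} y_{1110}⁻¹ holds in Homeo(C) (products acting on the right); consequently the element y_{10} y_{1110}⁻¹ lies in the group S. -/

import Mathlib

/-- The Cantor set of infinite binary sequences. -/
abbrev Cantor : Type := ℕ → Bool

/-- Concatenation of a finite binary sequence with an infinite binary sequence. -/
def cat (s : List Bool) (η : Cantor) : Cantor :=
  fun n => if h : n < s.length then s.get ⟨n, h⟩ else η (n - s.length)

/-- `s` is a (finite) prefix of the infinite sequence `ξ`. -/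
def IsPrefixOf (s : List Bool) (ξ : Cantor) : Prop := ∃ η : Cantor, ξ = cat s η

/-- The group of self-homeomorphisms of a topological space, with
`(f * g) ξ = f (g ξ)` (i.e. in the right-action convention `ξ·(g h) = (ξ·g)·h`,
the product `g * f` corresponds to the word "apply `f`, then `g`"). -/
instance {α : Type*} [TopologicalSpace α] : Group (α ≃ₜ α) where
  mul f g := g.trans f
  one := Homeomorph.refl α
  inv := Homeomorph.symm
  mul_assoc _ _ _ := Homeomorph.ext fun _ => rfl
  one_mul _ := Homeomorph.ext fun _ => rfl
  mul_one _ := Homeomorph.ext fun _ => rfl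
  inv_mul_cancel f := Homeomorph.ext fun ξ => f.symm_apply_apply ξ

@[simp] lemma homeo_mul_apply {α : Type*} [TopologicalSpace α] (f g : α ≃ₜ α) (ξ : α) :
    (f * g) ξ = f (g ξ) := rfl

@[simp] lemma homeo_one_apply {α : Type*} [TopologicalSpace α] (ξ : α) :
    (1 : α ≃ₜ α) ξ = ξ := rfl

@[simp] lemma homeo_inv_apply {α : Type*} [TopologicalSpace α] (f : α ≃ₜ α) (ξ : α) :
    (f⁻¹ : α ≃ₜ α) ξ = f.symm ξ := rfl

/-- The data of the basic homeomorphisms `x`, `y`, `x_s`, `y_s`, `p_n` of the Cantor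
set, together with their recursive defining equations. -/
structure LMData where
  x : Cantor ≃ₜ Cantor
  y : Cantor ≃ₜ Cantor
  xx : List Bool → Cantor ≃ₜ Cantor
  yy : List Bool → Cantor ≃ₜ Cantor
  p : ℕ → Cantor ≃ₜ Cantor
  hx00 : ∀ η, x (cat [false, false] η) = cat [false] η
  hx01 : ∀ η, x (cat [false, true] η) = cat [true, false] η
  hx1 : ∀ η, x (cat [true] η) = cat [true, true] η
  hy00 : ∀ η, y (cat [false, false] η) = cat [false] (y η)
  hy01 : ∀ η, y (cat [false, true] η) = cat [true, false] (y.symm η)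
  hy1 : ∀ η, y (cat [true] η) = cat [true, true] (y η)
  hxx : ∀ s η, xx s (cat s η) = cat s (x η)
  hxx' : ∀ s ξ, ¬ IsPrefixOf s ξ → xx s ξ = ξ
  hyy : ∀ s η, yy s (cat s η) = cat s (y η)
  hyy' : ∀ s ξ, ¬ IsPrefixOf s ξ → yy s ξ = ξ
  hp1 : ∀ n k η, k < n → p n (cat (List.replicate k true ++ [false]) η) =
      cat (List.replicate (k + 1) true ++ [false]) η
  hp2 : ∀ n η, p n (cat (List.replicate n true ++ [false]) η) =
      cat (List.replicate (n + 1) true) η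
  hp3 : ∀ n η, p n (cat (List.replicate (n + 1) true) η) = cat [false] η

/-- Thompson's group `T`, generated by all `x_s` and all `p_n`. -/
def Tgrp (D : LMData) : Subgroup (Cantor ≃ₜ Cantor) :=
  Subgroup.closure (Set.range D.xx ∪ Set.range D.p)

/-- The group `Ŝ`, generated by all `x_s`, all `y_s` and all `p_n`. -/
def Shat (D : LMData) : Subgroup (Cantor ≃ₜ Cantor) :=
  Subgroup.closure (Set.range D.xx ∪ Set.range D.yy ∪ Set.range D.p)

/-- The homeomorphism `y₁₀ y₁₁₀⁻¹` (right-action word: first `y₁₀`, then `y₁₁₀⁻¹`). -/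
def sgen (D : LMData) : Cantor ≃ₜ Cantor :=
  (D.yy [true, true, false])⁻¹ * D.yy [true, false]

/-- The group `S`, generated by Thompson's group `T` together with `y₁₀ y₁₁₀⁻¹`. -/
def Sgrp (D : LMData) : Subgroup (Cantor ≃ₜ Cantor) :=
  Subgroup.closure (↑(Tgrp D) ∪ {sgen D})

/-- The Lodha–Moore group `_yG_y`, generated by all `x_s` and all `y_s`. -/
def LMgrp (D : LMData) : Subgroup (Cantor ≃ₜ Cantor) :=
  Subgroup.closure (Set.range D.xx ∪ Set.range D.yy)

/-! Conjugating by `x_∅`, which maps the cylinder `1` onto the cylinder `11` by replacing the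
prefix, turns `y_{1s}` into `y_{11s}`. Hence `x_∅⁻¹ (y₁₀ y₁₁₀⁻¹) x_∅ = y₁₁₀ y₁₁₁₀⁻¹`, and the
product with `y₁₀ y₁₁₀⁻¹` telescopes to `y₁₀ y₁₁₁₀⁻¹`. -/

lemma cat_nil (η : Cantor) : cat [] η = η := by
  funext n
  simp [cat]

lemma cat_append (s t : List Bool) (η : Cantor) :
    cat (s ++ t) η = cat s (cat t η) := by
  funext n
  simp only [cat, List.get_eq_getElem, List.length_append]
  by_cases hs : n < s.length
  · rw [dif_pos (by omega), dif_pos hs, List.getElem_append_left hs]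
  · rw [dif_neg hs]
    by_cases ht : n - s.length < t.length
    · rw [dif_pos (by omega), dif_pos ht, List.getElem_append_right (by omega)]
    · rw [dif_neg (by omega), dif_neg ht, Nat.sub_add_eq]

namespace LMData

variable (D : LMData)

lemma x_eq_xx_nil : D.x = D.xx [] :=
  Homeomorph.ext fun ξ => by simpa only [cat_nil] using (D.hxx [] ξ).symm

lemma mul_yy_append_of_apply_cat (g : Cantor ≃ₜ Cantor) {u v : List Bool}
    (hg : ∀ η, g (cat u η) = cat v η) (s : List Bool) :
    g * D.yy (u ++ s) = D.yy (v ++ s) * g := by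
  ext ξ : 1
  simp only [homeo_mul_apply]
  by_cases hξ : IsPrefixOf (u ++ s) ξ
  · obtain ⟨μ, rfl⟩ := hξ
    rw [D.hyy, cat_append, hg, cat_append, hg, ← cat_append, ← cat_append, D.hyy]
  · have hgξ : ¬ IsPrefixOf (v ++ s) (g ξ) := by
      rintro ⟨μ, hμ⟩
      refine hξ ⟨μ, g.injective ?_⟩
      rw [hμ, cat_append, cat_append, hg]
    rw [D.hyy' _ _ hξ, D.hyy' _ _ hgξ]

lemma x_mul_yy_true_cons_mul_inv (s : List Bool) :
    D.x * D.yy (true :: s) * D.x⁻¹ = D.yy (true :: true :: s) := by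
  rw [mul_inv_eq_iff_eq_mul]
  exact D.mul_yy_append_of_apply_cat D.x (u := [true]) (v := [true, true]) D.hx1 s

lemma x_mem_Sgrp : D.x ∈ Sgrp D := by
  rw [x_eq_xx_nil]
  exact Subgroup.subset_closure (Or.inl (Subgroup.subset_closure (Or.inl ⟨[], rfl⟩)))

end LMData

/-- `(y₁₀ y₁₁₀⁻¹)(x_∅⁻¹ y₁₀ y₁₁₀⁻¹ x_∅) = y₁₀ y₁₁₁₀⁻¹` (right-action
words, written reversed in composition order), and consequently `y₁₀ y₁₁₁₀⁻¹ ∈ S`. -/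
theorem statement16 (D : LMData) :
    (D.x * ((D.yy [true, true, false])⁻¹ * D.yy [true, false]) * D.x⁻¹) *
        ((D.yy [true, true, false])⁻¹ * D.yy [true, false]) =
      (D.yy [true, true, true, false])⁻¹ * D.yy [true, false] ∧
    (D.yy [true, true, true, false])⁻¹ * D.yy [true, false] ∈ Sgrp D := by
  set a := D.yy [true, false]
  set b := D.yy [true, true, false]
  have heq : (D.x * (b⁻¹ * a) * D.x⁻¹) * (b⁻¹ * a) =
      (D.yy [true, true, true, false])⁻¹ * a :=
    calc (D.x * (b⁻¹ * a) * D.x⁻¹) * (b⁻¹ * a)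
        = (D.x * b * D.x⁻¹)⁻¹ * (D.x * a * D.x⁻¹) * (b⁻¹ * a) := by group
      _ = (D.yy [true, true, true, false])⁻¹ * b * (b⁻¹ * a) := by
          rw [D.x_mul_yy_true_cons_mul_inv, D.x_mul_yy_true_cons_mul_inv]
      _ = (D.yy [true, true, true, false])⁻¹ * a := by group
  have hsgen : b⁻¹ * a ∈ Sgrp D := Subgroup.subset_closure (Or.inr rfl)
  refine ⟨heq, heq ▸ ?_⟩
  exact mul_mem (mul_mem (mul_mem D.x_mem_Sgrp hsgen) (inv_mem D.x_mem_Sgrp)) hsgen
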